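/- Let F be an n-dimensional linear subspace of K[[x]] consisting of power series, with O(F) = sup{ord(f) : f ∈ F, f ≠ 0} finite. Then for any basis (f_1,...,f_n) of F, ord(W(f_1,...,f_n)) ≤ n·O(F) - n(n-1)/2. -/

import Mathlib

open PowerSeries

noncomputable def Wronskian {K : Type*} [Field K] {n : ℕ} (f : Fin n → K⟦X⟧) : K⟦X⟧ :=
  Matrix.det (Matrix.of fun i j : Fin n => (d⁄dX K)^[(i : ℕ)] (f j))

set_option linter.unusedSectionVars false

section Aux

variable {K : Type*} [Field K] [CharZero K]


lemma coeff_iterate_derivative (f : K⟦X⟧) (i m : ℕ) :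
    coeff (R := K) m ((d⁄dX K)^[i] f) = ((m + i).descFactorial i : K) * coeff (R := K) (m + i) f := by
  induction i generalizing f with
  | zero => simp
  | succ i ih =>
    rw [Function.iterate_succ_apply, ih (d⁄dX K f), coeff_derivative]
    have h1 : (m + i + 1).descFactorial (i+1) = (m + i + 1) * (m + i).descFactorial i :=
      Nat.succ_descFactorial_succ (m + i) i
    rw [← add_assoc, h1]
    push_cast
    ring

set_option linter.unusedSectionVars false

lemma coeff_wronskian {n : ℕ} (v : Fin n → K⟦X⟧) (d : Fin n → ℕ)
    (hord : ∀ j k, k < d j → coeff (R := K) k (v j) = 0) (N : ℕ)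
    (hN : N + (∑ i : Fin n, (i : ℕ)) = ∑ j, d j) :
    coeff (R := K) N (Matrix.det (Matrix.of fun i j : Fin n => (d⁄dX K)^[(i : ℕ)] (v j))) =
      (∏ j, coeff (R := K) (d j) (v j)) *
        Matrix.det (Matrix.of fun i j : Fin n => ((d j).descFactorial (i : ℕ) : K)) := by
  classical
  rw [Matrix.det_apply', map_sum]
  have key : ∀ σ : Equiv.Perm (Fin n),
      coeff (R := K) N (∏ i, (Matrix.of fun i j : Fin n => (d⁄dX K)^[(i : ℕ)] (v j)) (σ i) i) =
      ∏ i, (((d i).descFactorial ((σ i : ℕ)) : K) * coeff (R := K) (d i) (v i)) := by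
    intro σ
    have hσsum : ∑ i : Fin n, ((σ i : ℕ)) = ∑ i : Fin n, (i : ℕ) :=
      Equiv.sum_comp σ (fun i => (i : ℕ))
    rw [PowerSeries.coeff_prod]
    -- pointwise analysis
    have hpoint : ∀ l : Fin n →₀ ℕ, l ∈ Finset.finsuppAntidiag Finset.univ N →
        (∀ i, d i ≤ l i + (σ i : ℕ)) → ∀ i, l i + (σ i : ℕ) = d i := by
      intro l hl hle i
      rw [Finset.mem_finsuppAntidiag] at hl
      have hsum : ∑ i : Fin n, (l i + (σ i : ℕ)) = ∑ i, d i := by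
        rw [Finset.sum_add_distrib, hσsum, hl.1, hN]
      have := (Finset.sum_eq_sum_iff_of_le (fun i _ => hle i)).mp hsum.symm i (Finset.mem_univ i)
      omega
    by_cases hle : ∀ i, (σ i : ℕ) ≤ d i
    · set l₀ : Fin n →₀ ℕ := Finsupp.equivFunOnFinite.symm (fun i => d i - (σ i : ℕ)) with hl₀
      have hl₀app : ∀ i, l₀ i = d i - (σ i : ℕ) := fun i => rfl
      have hmem : l₀ ∈ Finset.finsuppAntidiag Finset.univ N := by
        rw [Finset.mem_finsuppAntidiag]
        constructor
        · show ∑ i, l₀ i = N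
          have h2 : ∑ i : Fin n, (l₀ i + (σ i : ℕ)) = ∑ i, d i := by
            apply Finset.sum_congr rfl
            intro i _
            have h3 := hle i
            rw [hl₀app i]
            omega
          rw [Finset.sum_add_distrib, hσsum] at h2
          omega
        · exact Finset.subset_univ _
      rw [Finset.sum_eq_single_of_mem l₀ hmem]
      · apply Finset.prod_congr rfl
        intro i _
        rw [Matrix.of_apply, _root_.coeff_iterate_derivative, hl₀app i,
          Nat.sub_add_cancel (hle i)]
      · intro l hl hne
        -- find violating index
        by_cases hge : ∀ i, d i ≤ l i + (σ i : ℕ)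
        · exfalso
          apply hne
          ext i
          have := hpoint l hl hge i
          rw [hl₀app i]
          omega
        · push_neg at hge
          obtain ⟨i₀, hi₀⟩ := hge
          apply Finset.prod_eq_zero (Finset.mem_univ i₀)
          rw [Matrix.of_apply, _root_.coeff_iterate_derivative, hord i₀ _ hi₀, mul_zero]
    · push_neg at hle
      obtain ⟨i₁, hi₁⟩ := hle
      rw [Finset.sum_eq_zero, Finset.prod_eq_zero (Finset.mem_univ i₁)]
      · rw [Nat.descFactorial_eq_zero_iff_lt.mpr hi₁]
        push_cast
        rw [zero_mul]
      · intro l hl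
        by_cases hge : ∀ i, d i ≤ l i + (σ i : ℕ)
        · exfalso
          have := hpoint l hl hge i₁
          omega
        · push_neg at hge
          obtain ⟨i₀, hi₀⟩ := hge
          apply Finset.prod_eq_zero (Finset.mem_univ i₀)
          rw [Matrix.of_apply, _root_.coeff_iterate_derivative, hord i₀ _ hi₀, mul_zero]
  calc ∑ σ : Equiv.Perm (Fin n), coeff (R := K) N
        (((Equiv.Perm.sign σ : ℤ) : K⟦X⟧) *
          ∏ i, (Matrix.of fun i j : Fin n => (d⁄dX K)^[(i : ℕ)] (v j)) (σ i) i)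
      = ∑ σ : Equiv.Perm (Fin n), ((Equiv.Perm.sign σ : ℤ) : K) *
          ∏ i, (((d i).descFactorial ((σ i : ℕ)) : K) * coeff (R := K) (d i) (v i)) := by
        apply Finset.sum_congr rfl
        intro σ _
        rw [← zsmul_eq_mul, map_zsmul, key σ, zsmul_eq_mul]
    _ = (∏ j, coeff (R := K) (d j) (v j)) *
        Matrix.det (Matrix.of fun i j : Fin n => ((d j).descFactorial (i : ℕ) : K)) := by
        rw [Matrix.det_apply', Finset.mul_sum]
        apply Finset.sum_congr rfl
        intro σ _
        simp only [Matrix.of_apply, Finset.prod_mul_distrib]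
        ring

lemma det_descFactorial_ne_zero {n : ℕ} (d : Fin n → ℕ) (hd : Function.Injective d) :
    Matrix.det (Matrix.of fun i j : Fin n => ((d j).descFactorial (i : ℕ) : K)) ≠ 0 := by
  have h := Matrix.det_eval_matrixOfPolynomials_eq_det_vandermonde (R := K)
      (fun j => (d j : K)) (fun i => descPochhammer K i)
      (fun i => descPochhammer_natDegree K i) (fun i => monic_descPochhammer K i)
  have h2 : (Matrix.of fun i j : Fin n => ((descPochhammer K (j : ℕ)).eval ((d i : K))))
      = (Matrix.of fun i j : Fin n => ((d j).descFactorial (i : ℕ) : K)).transpose := by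
    ext i j
    rw [Matrix.of_apply, Matrix.transpose_apply, Matrix.of_apply,
      descPochhammer_eval_eq_descFactorial]
  rw [h2, Matrix.det_transpose] at h
  rw [← h]
  exact Matrix.det_vandermonde_ne_zero_iff.mpr fun i j hij => hd (Nat.cast_injective hij)

lemma sum_fin_id (n : ℕ) : ∑ i : Fin n, (i : ℕ) = n.choose 2 := by
  rw [show (∑ i : Fin n, (i : ℕ)) = ∑ i ∈ Finset.range n, i from
    Fin.sum_univ_eq_sum_range (fun i => i) n, Nat.choose_two_right, Finset.sum_range_id]

lemma order_wronskian'_le {n : ℕ} (v : Fin n → K⟦X⟧) (d : Fin n → ℕ)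
    (hd : StrictMono d) (hv : ∀ j, (v j).order = (d j : ℕ∞)) :
    (Wronskian v).order ≤ (((∑ j, d j) - n.choose 2 : ℕ) : ℕ∞) := by
  have hco : ∀ j, coeff (R := K) (d j) (v j) ≠ 0 ∧ ∀ k < d j, coeff (R := K) k (v j) = 0 :=
    fun j => order_eq_nat.mp (hv j)
  have hle : ∀ i : Fin n, (i : ℕ) ≤ d i := by
    have key : ∀ m : ℕ, ∀ i : Fin n, i.val = m → m ≤ d i := by
      intro m
      induction m with
      | zero => exact fun i _ => Nat.zero_le _
      | succ m ih =>
        intro i hi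
        have hm : m < n := by have := i.isLt; omega
        have h1 := ih ⟨m, hm⟩ rfl
        have h2 : d ⟨m, hm⟩ < d i := hd (by rw [Fin.lt_def]; simp; omega)
        omega
    exact fun i => key i.val i rfl
  have hsum_le : n.choose 2 ≤ ∑ j, d j := by
    rw [← sum_fin_id]
    exact Finset.sum_le_sum fun i _ => hle i
  apply order_le
  rw [show Wronskian v = Matrix.det
    (Matrix.of fun i j : Fin n => (d⁄dX K)^[(i : ℕ)] (v j)) from rfl]
  rw [coeff_wronskian v d (fun j k hk => (hco j).2 k hk) _ (by rw [sum_fin_id]; omega)]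
  exact mul_ne_zero (Finset.prod_ne_zero_iff.mpr fun j _ => (hco j).1)
    (det_descFactorial_ne_zero d hd.injective)

lemma iterate_derivative_sum_smul {n : ℕ} (i : ℕ) (a : Fin n → K) (v : Fin n → K⟦X⟧) :
    (d⁄dX K)^[i] (∑ l, a l • v l) = ∑ l, a l • (d⁄dX K)^[i] (v l) := by
  induction i with
  | zero => simp
  | succ i ih =>
    rw [Function.iterate_succ_apply', ih, map_sum]
    exact Finset.sum_congr rfl fun l _ => by
      rw [Derivation.map_smul, Function.iterate_succ_apply']

lemma wronskian'_matrix_smul {n : ℕ} (v : Fin n → K⟦X⟧) (A : Matrix (Fin n) (Fin n) K) :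
    Wronskian (fun j => ∑ l, A l j • v l) = (C (R := K) A.det) * Wronskian v := by
  have h : (Matrix.of fun i j : Fin n => (d⁄dX K)^[(i:ℕ)] (∑ l, A l j • v l))
      = (Matrix.of fun i j : Fin n => (d⁄dX K)^[(i:ℕ)] (v j)) * A.map (C (R := K)) := by
    apply Matrix.ext
    intro i j
    rw [Matrix.mul_apply, Matrix.of_apply, iterate_derivative_sum_smul]
    apply Finset.sum_congr rfl
    intro l _
    rw [Matrix.of_apply, Matrix.map_apply, smul_eq_C_mul, mul_comm]
  show Matrix.det _ = _
  rw [h, Matrix.det_mul, mul_comm]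
  congr 1
  have hmd := (C (R := K)).map_det A
  rw [RingHom.mapMatrix_apply] at hmd
  exact hmd.symm

lemma linearIndependent_of_orders {ι : Type*} (v : ι → K⟦X⟧) (d : ι → ℕ)
    (hinj : Function.Injective d) (hv : ∀ i, (v i).order = (d i : ℕ∞)) :
    LinearIndependent K v := by
  classical
  rw [linearIndependent_iff']
  intro s a hsum i hi
  by_contra hai
  have hit : i ∈ s.filter (fun j => a j ≠ 0) := Finset.mem_filter.mpr ⟨hi, hai⟩
  obtain ⟨i₀, hi₀t, hi₀min⟩ :=
    Finset.exists_min_image (s.filter fun j => a j ≠ 0) d ⟨i, hit⟩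
  have hi₀s := (Finset.mem_filter.mp hi₀t).1
  have hai₀ := (Finset.mem_filter.mp hi₀t).2
  have h0 := congrArg (coeff (R := K) (d i₀)) hsum
  rw [map_sum, map_zero] at h0
  rw [Finset.sum_eq_single_of_mem i₀ hi₀s] at h0
  · rw [map_smul, smul_eq_mul] at h0
    rcases mul_eq_zero.mp h0 with h | h
    · exact hai₀ h
    · exact (order_eq_nat.mp (hv i₀)).1 h
  · intro j hj hne
    by_cases haj : a j = 0
    · rw [haj, zero_smul, map_zero]
    · have hjt : j ∈ s.filter (fun j => a j ≠ 0) := Finset.mem_filter.mpr ⟨hj, haj⟩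
      have hlt : d i₀ < d j :=
        lt_of_le_of_ne (hi₀min j hjt) (fun h => hne (hinj h.symm ▸ rfl))
      rw [map_smul, (order_eq_nat.mp (hv j)).2 (d i₀) hlt, smul_zero]

theorem order_wronskian_le'
    {n : ℕ}
    (F : Submodule K K⟦X⟧) (O : ℕ)
    (hO : IsGreatest {m : ℕ∞ | ∃ f ∈ F, f ≠ 0 ∧ f.order = m} (O : ℕ∞))
    (b : Module.Basis (Fin n) K F) :
    (Wronskian (fun i => (b i : K⟦X⟧))).order
      ≤ ((n * O - n.choose 2 : ℕ) : ℕ∞) := by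
  classical
  have hub : ∀ f : K⟦X⟧, f ∈ F → f ≠ 0 → f.order ≤ (O : ℕ∞) :=
    fun f hf h0 => hO.2 ⟨f, hf, h0, rfl⟩
  set S : Finset ℕ :=
    (Finset.range (O + 1)).filter
      (fun m => ∃ f, f ∈ (F : Set K⟦X⟧) ∧ f ≠ 0 ∧ f.order = (m : ℕ∞)) with hS
  have hgex : ∀ m : S, ∃ f, f ∈ (F : Set K⟦X⟧) ∧ f ≠ 0 ∧ f.order = ((m : ℕ) : ℕ∞) :=
    fun m => (Finset.mem_filter.mp m.2).2
  choose g hgF hg0 hgord using hgex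
  -- every nonzero element's order gives a member of S
  have horder_mem : ∀ f : K⟦X⟧, f ∈ F → f ≠ 0 → ∃ df : ℕ, f.order = (df : ℕ∞) ∧ df ∈ S := by
    intro f hf h0
    have hle := hub f hf h0
    have hne : f.order ≠ ⊤ := fun h => by
      rw [h] at hle
      exact (top_le_iff.mp hle ▸ ENat.coe_ne_top O) rfl
    lift f.order to ℕ using hne with df hdf
    refine ⟨df, rfl, ?_⟩
    refine Finset.mem_filter.mpr ⟨Finset.mem_range.mpr ?_, f, hf, h0, hdf.symm⟩
    have : (df : ℕ∞) ≤ (O : ℕ∞) := hle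
    exact Nat.lt_succ_of_le (by exact_mod_cast this)
  -- spanning
  have hspan : ∀ k : ℕ, ∀ f : K⟦X⟧, f ∈ F → ((O + 1 - k : ℕ) : ℕ∞) ≤ f.order →
      f ∈ Submodule.span K (Set.range g) := by
    intro k
    induction k with
    | zero =>
      intro f hf hord
      by_contra hcon
      have h0 : f ≠ 0 := fun h => hcon (h ▸ Submodule.zero_mem _)
      have := le_trans hord (hub f hf h0)
      rw [Nat.sub_zero] at this
      have : O + 1 ≤ O := by exact_mod_cast this
      omega
    | succ k ih =>
      intro f hf hord
      by_cases h0 : f = 0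
      · rw [h0]; exact Submodule.zero_mem _
      obtain ⟨df, hdford, hdfS⟩ := horder_mem f hf h0
      set m : S := ⟨df, hdfS⟩ with hm
      have hgm := order_eq_nat.mp (hgord m)
      have hf' := order_eq_nat.mp hdford
      set c : K := coeff (R := K) df f / coeff (R := K) df (g m) with hc
      set f' : K⟦X⟧ := f - c • g m with hf'def
      have hf'F : f' ∈ F := Submodule.sub_mem _ hf (Submodule.smul_mem _ _ (hgF m))
      have hf'ord : ((df + 1 : ℕ) : ℕ∞) ≤ f'.order := by
        apply nat_le_order
        intro i hilt
        rw [hf'def, map_sub, map_smul, smul_eq_mul]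
        rcases Nat.lt_or_ge i df with hi | hi
        · rw [hf'.2 i hi, hgm.2 i hi, mul_zero, sub_zero]
        · have : i = df := by omega
          subst this
          rw [hc, div_mul_cancel₀ _ hgm.1, sub_self]
      have hdfk : O + 1 - (k + 1) ≤ df := by
        have : ((O + 1 - (k+1) : ℕ) : ℕ∞) ≤ (df : ℕ∞) := hdford ▸ hord
        exact_mod_cast this
      have hstep : ((O + 1 - k : ℕ) : ℕ∞) ≤ f'.order := by
        refine le_trans ?_ hf'ord
        have : O + 1 - k ≤ df + 1 := by omega
        exact_mod_cast this
      have hmem' := ih f' hf'F hstep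
      have : f = f' + c • g m := by rw [hf'def]; ring
      rw [this]
      exact Submodule.add_mem _ hmem'
        (Submodule.smul_mem _ _ (Submodule.subset_span ⟨m, rfl⟩))
  have hspan0 : ∀ f : K⟦X⟧, f ∈ F → f ∈ Submodule.span K (Set.range g) := by
    intro f hf
    apply hspan (O + 1) f hf
    rw [Nat.sub_self]
    exact_mod_cast zero_le
  -- linear independence
  have hli : LinearIndependent K g :=
    linearIndependent_of_orders g (fun m : S => (m : ℕ))
      (fun x y h => Subtype.ext h) hgord
  -- basis of F indexed by S
  set w : S → F := fun m => ⟨g m, hgF m⟩ with hw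
  have hcomp : (F.subtype ∘ w) = g := rfl
  have hliw : LinearIndependent K w :=
    (hcomp ▸ hli).of_comp F.subtype
  have hspanw : ⊤ ≤ Submodule.span K (Set.range w) := by
    intro x _
    have hx : (x : K⟦X⟧) ∈ Submodule.span K (Set.range g) := hspan0 _ x.2
    have hmap : Submodule.map F.subtype (Submodule.span K (Set.range w))
        = Submodule.span K (Set.range g) := by
      rw [Submodule.map_span, ← Set.range_comp, hcomp]
    rw [← hmap] at hx
    obtain ⟨y, hy, hyx⟩ := hx
    have : y = x := Subtype.ext hyx
    exact this ▸ hy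
  set cb : Module.Basis S K F := Module.Basis.mk hliw hspanw with hcb
  have hcard : S.card = n := by
    have e' : Fin n ≃ S := b.indexEquiv cb
    have := Fintype.card_congr e'
    rw [Fintype.card_fin, Fintype.card_coe] at this
    exact this.symm
  set e : Fin n ≃o {x // x ∈ S} := S.orderIsoOfFin hcard with he
  set d : Fin n → ℕ := fun i => (e i : ℕ) with hd
  have hdmono : StrictMono d := by
    intro i j hij
    exact_mod_cast Subtype.coe_lt_coe.mpr (e.strictMono hij)
  set c' : Module.Basis (Fin n) K F := cb.reindex e.toEquiv.symm with hc'
  have hc'app : ∀ i, (c' i : K⟦X⟧) = g (e i) := by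
    intro i
    rw [hc', Module.Basis.reindex_apply, Equiv.symm_symm]
    rw [hcb, Module.Basis.mk_apply]
    rfl
  have hordc' : ∀ i, ((c' i : K⟦X⟧)).order = (d i : ℕ∞) := by
    intro i
    rw [hc'app i, hd]
    exact hgord (e i)
  -- order of wronskian of c'
  have hwc' := order_wronskian'_le (fun i => (c' i : K⟦X⟧)) d hdmono hordc'
  -- d i ≤ O
  have hdO : ∀ i, d i ≤ O := by
    intro i
    have h1 := (Finset.mem_filter.mp (e i).2).1
    have h2 := Finset.mem_range.mp h1
    have h3 : d i = ↑(e i) := rfl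
    omega
  have hsumd : ∑ j, d j ≤ n * O := by
    calc ∑ j, d j ≤ ∑ _j : Fin n, O := Finset.sum_le_sum fun i _ => hdO i
    _ = n * O := by rw [Finset.sum_const, Finset.card_univ, Fintype.card_fin, smul_eq_mul]
  -- change of basis
  set A : Matrix (Fin n) (Fin n) K := c'.toMatrix (fun i => b i) with hA
  have hbc : ∀ j, (b j : K⟦X⟧) = ∑ l, A l j • (c' l : K⟦X⟧) := by
    intro j
    have := c'.sum_toMatrix_smul_self (fun i => b i) j
    have h2 := congrArg (F.subtype) this
    rw [map_sum] at h2
    simp only [map_smul] at h2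
    exact h2.symm
  have hAdet : A.det ≠ 0 := by
    have : Invertible A := c'.invertibleToMatrix b
    exact (Matrix.isUnit_iff_isUnit_det A).mp (isUnit_of_invertible A) |>.ne_zero
  have hwb : Wronskian (fun i => (b i : K⟦X⟧)) = C (R := K) A.det * Wronskian (fun i => (c' i : K⟦X⟧)) := by
    have heq : (fun i => (b i : K⟦X⟧)) = fun j => ∑ l, A l j • (c' l : K⟦X⟧) :=
      funext hbc
    rw [heq, wronskian'_matrix_smul]
  rw [hwb, order_mul]
  have hCord : (C (R := K) A.det).order = 0 := by
    rw [← monomial_zero_eq_C_apply, order_monomial_of_ne_zero 0 _ hAdet, Nat.cast_zero]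
  rw [hCord, zero_add]
  refine le_trans hwc' ?_
  exact_mod_cast Nat.sub_le_sub_right hsumd (n.choose 2)

end Aux

theorem order_wronskian_le
    {K : Type*} [Field K] [CharZero K] {n : ℕ}
    (F : Submodule K K⟦X⟧) (O : ℕ)
    (hO : IsGreatest {m : ℕ∞ | ∃ f ∈ F, f ≠ 0 ∧ f.order = m} (O : ℕ∞))
    (b : Module.Basis (Fin n) K F) :
    (Wronskian (fun i => (b i : K⟦X⟧))).order
      ≤ ((n * O - n.choose 2 : ℕ) : ℕ∞) := order_wronskian_le' F O hO b
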